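/- arXiv:1602.02269 — 2 statements merged into one kernel-verified Lean document; each statement's English description precedes it below -/
import Mathlib

section
/- The functional ‖f‖_{p-TV,[a,b]} := (sup_{δ>0} δ^{p−1} TV(f,[a,b],δ))^{1/p} satisfies the triangle inequality: for all f, h : [a,b] → W with finite such norm, ‖f + h‖_{p-TV,[a,b]} ≤ ‖f‖_{p-TV,[a,b]} + ‖h‖_{p-TV,[a,b]}. -/
open Set Filter Topology ENNReal

noncomputable def truncVar {E : Type*} [PseudoMetricSpace E] (f : ℝ → E) (a b δ : ℝ) : ℝ≥0∞ :=
  ⨆ (n : ℕ) (t : Fin (n + 1) → ℝ) (_ : StrictMono t) (_ : ∀ i, t i ∈ Set.Icc a b),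
    ENNReal.ofReal (∑ i : Fin n, max (dist (f (t i.succ)) (f (t i.castSucc)) - δ) 0)

def Regulated {E : Type*} [PseudoMetricSpace E] (f : ℝ → E) (a b : ℝ) : Prop :=
  (∀ t ∈ Set.Ico a b, ∃ L, Filter.Tendsto f (nhdsWithin t (Set.Ioi t)) (nhds L)) ∧
  (∀ t ∈ Set.Ioc a b, ∃ L, Filter.Tendsto f (nhdsWithin t (Set.Iio t)) (nhds L))

noncomputable def pTVsup {W : Type*} [NormedAddCommGroup W] (f : ℝ → W) (a b p : ℝ) : ℝ≥0∞ :=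
  ⨆ (δ : ℝ) (_ : 0 < δ), ENNReal.ofReal (δ ^ (p - 1)) * truncVar f a b δ

noncomputable def pTVnorm {W : Type*} [NormedAddCommGroup W] (f : ℝ → W) (a b p : ℝ) : ℝ≥0∞ :=
  pTVsup f a b p ^ (1 / p)

/-!
Splitting the threshold `δ = μ δ + ν δ` (`μ + ν = 1`) in the triangle inequality for distances
gives `TV(f + h, δ) ≤ TV(f, μ δ) + TV(h, ν δ)`, hence `‖f + h‖ᵖ ≤ μ^(1-p) ‖f‖ᵖ + ν^(1-p) ‖h‖ᵖ`.
If `‖f‖ ≤ c` and `‖h‖ ≤ d` with `c, d > 0`, the choice `μ = c / (c + d)` bounds the right-hand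
side by `(c + d)ᵖ`; taking `c = ‖f‖ + ε`, `d = ‖h‖ + ε` and letting `ε → 0` covers vanishing norms.
-/

lemma ofReal_sum_le_truncVar {E : Type*} [PseudoMetricSpace E] (f : ℝ → E) (a b δ : ℝ) {n : ℕ}
    (t : Fin (n + 1) → ℝ) (ht : StrictMono t) (hab : ∀ i, t i ∈ Set.Icc a b) :
    ENNReal.ofReal (∑ i : Fin n, max (dist (f (t i.succ)) (f (t i.castSucc)) - δ) 0)
      ≤ truncVar f a b δ :=
  le_iSup_of_le n <| le_iSup_of_le t <| le_iSup_of_le ht <| le_iSup_of_le hab le_rfl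

section

variable {W : Type*} [NormedAddCommGroup W]

lemma truncVar_add_le (f h : ℝ → W) (a b δ₁ δ₂ : ℝ) :
    truncVar (fun t => f t + h t) a b (δ₁ + δ₂) ≤ truncVar f a b δ₁ + truncVar h a b δ₂ := by
  refine iSup_le fun n => iSup_le fun t => iSup_le fun ht => iSup_le fun hab => ?_
  refine le_trans ?_ (add_le_add (ofReal_sum_le_truncVar f a b δ₁ t ht hab)
    (ofReal_sum_le_truncVar h a b δ₂ t ht hab))
  rw [← ENNReal.ofReal_add (by positivity) (by positivity), ← Finset.sum_add_distrib]
  refine ENNReal.ofReal_le_ofReal (Finset.sum_le_sum fun i _ => max_le ?_ (by positivity))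
  have := dist_add_add_le (f (t i.succ)) (h (t i.succ)) (f (t i.castSucc)) (h (t i.castSucc))
  linarith [le_max_left (dist (f (t i.succ)) (f (t i.castSucc)) - δ₁) 0,
    le_max_left (dist (h (t i.succ)) (h (t i.castSucc)) - δ₂) 0]

lemma ofReal_rpow_mul_truncVar_le_pTVsup (f : ℝ → W) (a b p : ℝ) {δ : ℝ} (hδ : 0 < δ) :
    ENNReal.ofReal (δ ^ (p - 1)) * truncVar f a b δ ≤ pTVsup f a b p :=
  le_iSup₂_of_le δ hδ le_rfl

lemma pTVsup_add_le (f h : ℝ → W) (a b p : ℝ) {μ ν : ℝ} (hμ : 0 < μ) (hν : 0 < ν)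
    (hμν : μ + ν = 1) :
    pTVsup (fun t => f t + h t) a b p ≤
      ENNReal.ofReal (μ ^ (1 - p)) * pTVsup f a b p
        + ENNReal.ofReal (ν ^ (1 - p)) * pTVsup h a b p := by
  refine iSup₂_le fun δ hδ => ?_
  have hsplit : ∀ {c : ℝ}, 0 < c →
      ENNReal.ofReal (δ ^ (p - 1)) = ENNReal.ofReal (c ^ (1 - p)) *
        ENNReal.ofReal ((c * δ) ^ (p - 1)) := fun {c} hc => by
    rw [← ENNReal.ofReal_mul (by positivity), Real.mul_rpow hc.le hδ.le, ← mul_assoc,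
      ← Real.rpow_add hc]
    norm_num
  calc ENNReal.ofReal (δ ^ (p - 1)) * truncVar (fun t => f t + h t) a b δ
      ≤ ENNReal.ofReal (δ ^ (p - 1)) * (truncVar f a b (μ * δ) + truncVar h a b (ν * δ)) := by
        gcongr
        simpa only [← add_mul, hμν, one_mul] using truncVar_add_le f h a b (μ * δ) (ν * δ)
    _ ≤ ENNReal.ofReal (μ ^ (1 - p)) * pTVsup f a b p
        + ENNReal.ofReal (ν ^ (1 - p)) * pTVsup h a b p := by
        rw [mul_add]
        gcongr ?_ + ?_
        · rw [hsplit hμ, mul_assoc]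
          gcongr
          exact ofReal_rpow_mul_truncVar_le_pTVsup f a b p (by positivity)
        · rw [hsplit hν, mul_assoc]
          gcongr
          exact ofReal_rpow_mul_truncVar_le_pTVsup h a b p (by positivity)

lemma div_rpow_one_sub_mul_rpow {c s : ℝ} (hc : 0 < c) (hs : 0 < s) (p : ℝ) :
    (c / s) ^ (1 - p) * c ^ p = c * s ^ (p - 1) := by
  rw [Real.div_rpow hc.le hs.le, div_mul_eq_mul_div, div_eq_mul_inv, ← Real.rpow_add hc,
    ← Real.rpow_neg hs.le]
  norm_num

lemma pTVnorm_le_ofReal_iff (f : ℝ → W) (a b : ℝ) {p : ℝ} (hp : 0 < p) {c : ℝ} (hc : 0 ≤ c) :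
    pTVnorm f a b p ≤ ENNReal.ofReal c ↔ pTVsup f a b p ≤ ENNReal.ofReal (c ^ p) := by
  rw [pTVnorm, one_div, ENNReal.rpow_inv_le_iff hp, ENNReal.ofReal_rpow_of_nonneg hc hp.le]

lemma pTVnorm_add_le_of_le (f h : ℝ → W) (a b : ℝ) {p : ℝ} (hp : 0 < p) {c d : ℝ}
    (hc : 0 < c) (hd : 0 < d) (hfc : pTVnorm f a b p ≤ ENNReal.ofReal c)
    (hhd : pTVnorm h a b p ≤ ENNReal.ofReal d) :
    pTVnorm (fun t => f t + h t) a b p ≤ ENNReal.ofReal (c + d) := by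
  rw [pTVnorm_le_ofReal_iff _ a b hp hc.le] at hfc
  rw [pTVnorm_le_ofReal_iff _ a b hp hd.le] at hhd
  rw [pTVnorm_le_ofReal_iff _ a b hp (by positivity)]
  have hcd : 0 < c + d := by positivity
  calc pTVsup (fun t => f t + h t) a b p
      ≤ ENNReal.ofReal ((c / (c + d)) ^ (1 - p)) * pTVsup f a b p
        + ENNReal.ofReal ((d / (c + d)) ^ (1 - p)) * pTVsup h a b p :=
        pTVsup_add_le f h a b p (by positivity) (by positivity)
          (by field_simp)
    _ ≤ ENNReal.ofReal ((c / (c + d)) ^ (1 - p) * c ^ p)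
        + ENNReal.ofReal ((d / (c + d)) ^ (1 - p) * d ^ p) := by
        rw [ENNReal.ofReal_mul (by positivity), ENNReal.ofReal_mul (by positivity)]
        gcongr
    _ = ENNReal.ofReal ((c + d) ^ p) := by
        rw [div_rpow_one_sub_mul_rpow hc hcd, div_rpow_one_sub_mul_rpow hd hcd,
          ← ENNReal.ofReal_add (by positivity) (by positivity), ← add_mul,
          ← Real.rpow_one_add' hcd.le (by simp [hp.ne'])]
        norm_num

end

theorem stmt_13_general {W : Type*} [NormedAddCommGroup W]
    (a b p : ℝ) (hp : 1 ≤ p) (f h : ℝ → W)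
    (hf : pTVsup f a b p < ⊤) (hh : pTVsup h a b p < ⊤) :
    pTVnorm (fun t => f t + h t) a b p ≤ pTVnorm f a b p + pTVnorm h a b p := by
  have hp0 : 0 < p := by linarith
  have hf' : pTVnorm f a b p ≠ ⊤ := ENNReal.rpow_ne_top_of_nonneg (by positivity) hf.ne
  have hh' : pTVnorm h a b p ≠ ⊤ := ENNReal.rpow_ne_top_of_nonneg (by positivity) hh.ne
  refine ENNReal.le_of_forall_pos_le_add fun ε hε _ => ?_
  have hε2 : (0 : ℝ) < ε / 2 := by positivity
  calc pTVnorm (fun t => f t + h t) a b p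
      ≤ ENNReal.ofReal ((pTVnorm f a b p).toReal + ε / 2 + ((pTVnorm h a b p).toReal + ε / 2)) :=
        pTVnorm_add_le_of_le f h a b hp0 (by positivity) (by positivity)
          (ENNReal.le_ofReal_iff_toReal_le hf' (by positivity) |>.2 (by linarith))
          (ENNReal.le_ofReal_iff_toReal_le hh' (by positivity) |>.2 (by linarith))
    _ = pTVnorm f a b p + pTVnorm h a b p + ε := by
        rw [show ∀ x y : ℝ, x + ε / 2 + (y + ε / 2) = x + y + ε from fun x y => by ring,
          ENNReal.ofReal_add (by positivity) (by positivity),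
          ENNReal.ofReal_add (by positivity) (by positivity),
          ENNReal.ofReal_toReal hf', ENNReal.ofReal_toReal hh', ENNReal.ofReal_coe_nnreal]

theorem stmt_13 {W : Type*} [NormedAddCommGroup W] [NormedSpace ℝ W] [CompleteSpace W]
    (a b p : ℝ) (hab : a < b) (hp : 1 ≤ p) (f h : ℝ → W)
    (hf : pTVsup f a b p < ⊤) (hh : pTVsup h a b p < ⊤) :
    pTVnorm (fun t => f t + h t) a b p ≤ pTVnorm f a b p + pTVnorm h a b p :=
  stmt_13_general a b p hp f h hf hh
end

section
/- The space U^p([a,b],W) of functions f : [a,b] → W with sup_{δ>0} δ^{p−1}TV(f,[a,b],δ) < ∞, equipped with the norm ‖f‖ = ‖f(a)‖_W + (sup_{δ>0} δ^{p−1} TV(f,[a,b],δ))^{1/p}, is complete: every Cauchy sequence in this norm converges in this norm to an element of U^p([a,b],W). -/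
/-!
Evaluation at a point of `[a, b]` is bounded by the norm: a single jump `‖f t - f s‖ = 2δ`
contributes `δ ^ (p - 1) · δ = δ ^ p` to the supremum at level `δ`. Hence a Cauchy sequence
converges pointwise on `[a, b]` to some `g`. Every truncated sum is a continuous function of
finitely many values, so `f ↦ sup_δ δ ^ (p - 1) TV(f, δ)` is lower semicontinuous under pointwise
convergence; the Cauchy bounds on `f n - f m` therefore pass to `f n - g` as `m → ∞`. Finally
`g = f N - (f N - g)`, and the supremum is subadditive up to the factor `2 ^ (p - 1)` that comes
from splitting the level `δ` into `δ / 2 + δ / 2`.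
-/

open Set Filter Topology ENNReal

noncomputable def fullNorm {W : Type*} [NormedAddCommGroup W] (f : ℝ → W) (a b p : ℝ) : ℝ≥0∞ :=
  ENNReal.ofReal ‖f a‖ + pTVnorm f a b p

noncomputable def truncSum {E : Type*} [PseudoMetricSpace E] (f : ℝ → E) (δ : ℝ) {n : ℕ}
    (t : Fin (n + 1) → ℝ) : ℝ :=
  ∑ i : Fin n, max (dist (f (t i.succ)) (f (t i.castSucc)) - δ) 0

section TruncSum

variable {E : Type*} [PseudoMetricSpace E] {δ : ℝ} {n : ℕ} {t : Fin (n + 1) → ℝ}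

lemma truncSum_nonneg (f : ℝ → E) : 0 ≤ truncSum f δ t :=
  Finset.sum_nonneg fun _ _ => le_max_right _ _

lemma truncSum_le_add {f u v : ℝ → E}
    (H : ∀ r s, dist (f r) (f s) ≤ dist (u r) (u s) + dist (v r) (v s)) :
    truncSum f δ t ≤ truncSum u (δ / 2) t + truncSum v (δ / 2) t := by
  rw [truncSum, truncSum, truncSum, ← Finset.sum_add_distrib]
  refine Finset.sum_le_sum fun i _ => max_le ?_ (by positivity)
  have := H (t i.succ) (t i.castSucc)
  linarith [le_max_left (dist (u (t i.succ)) (u (t i.castSucc)) - δ / 2) 0,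
    le_max_left (dist (v (t i.succ)) (v (t i.castSucc)) - δ / 2) 0]

lemma tendsto_truncSum {ι : Type*} {l : Filter ι} {u : ι → ℝ → E} {v : ℝ → E}
    (h : ∀ i, Tendsto (fun m => u m (t i)) l (𝓝 (v (t i)))) :
    Tendsto (fun m => truncSum (u m) δ t) l (𝓝 (truncSum v δ t)) :=
  tendsto_finsetSum _ fun i _ =>
    (((h i.succ).dist (h i.castSucc)).sub_const δ).max tendsto_const_nhds

end TruncSum

section TruncatedVariation

variable {W : Type*} [NormedAddCommGroup W] {a b p : ℝ}

lemma ofReal_rpow_mul_truncSum_le_pTVsup (f : ℝ → W) {δ : ℝ} (hδ : 0 < δ) {n : ℕ}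
    {t : Fin (n + 1) → ℝ} (ht : StrictMono t) (hmem : ∀ i, t i ∈ Icc a b) :
    ENNReal.ofReal (δ ^ (p - 1) * truncSum f δ t) ≤ pTVsup f a b p := by
  rw [ENNReal.ofReal_mul (by positivity), pTVsup]
  refine le_iSup_of_le δ <| le_iSup_of_le hδ <| mul_le_mul_right ?_ _
  unfold truncVar
  exact le_iSup_of_le n <| le_iSup_of_le t <| le_iSup_of_le ht <| le_iSup_of_le hmem le_rfl

lemma pTVsup_le {f : ℝ → W} {C : ℝ≥0∞}
    (H : ∀ δ : ℝ, 0 < δ → ∀ (n : ℕ) (t : Fin (n + 1) → ℝ), StrictMono t →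
      (∀ i, t i ∈ Icc a b) → ENNReal.ofReal (δ ^ (p - 1) * truncSum f δ t) ≤ C) :
    pTVsup f a b p ≤ C := by
  refine iSup₂_le fun δ hδ => ?_
  simp only [truncVar, ENNReal.mul_iSup]
  refine iSup_le fun n => iSup_le fun t => iSup_le fun ht => iSup_le fun hmem => ?_
  rw [← ENNReal.ofReal_mul (by positivity)]
  exact H δ hδ n t ht hmem

lemma pTVnorm_le_iff {f : ℝ → W} {C : ℝ≥0∞} (hp : 0 < p) :
    pTVnorm f a b p ≤ C ↔ pTVsup f a b p ≤ C ^ p := by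
  rw [pTVnorm, one_div, ENNReal.rpow_inv_le_iff hp]

lemma le_pTVnorm_iff {f : ℝ → W} {C : ℝ≥0∞} (hp : 0 < p) :
    C ≤ pTVnorm f a b p ↔ C ^ p ≤ pTVsup f a b p := by
  rw [pTVnorm, one_div, ENNReal.le_rpow_inv_iff hp]

lemma fullNorm_lt_top_iff {f : ℝ → W} (hp : 0 < p) :
    fullNorm f a b p < ⊤ ↔ pTVsup f a b p < ⊤ := by
  rw [fullNorm, pTVnorm, ENNReal.add_lt_top, ENNReal.rpow_lt_top_iff_of_pos (by positivity)]
  exact and_iff_right ENNReal.ofReal_lt_top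

lemma dist_le_two_mul_pTVnorm (f : ℝ → W) (hp : 0 < p) {s t : ℝ} (hs : s ∈ Icc a b)
    (ht : t ∈ Icc a b) (hst : s < t) :
    ENNReal.ofReal (dist (f t) (f s)) ≤ 2 * pTVnorm f a b p := by
  set δ := dist (f t) (f s) / 2
  rcases (div_nonneg dist_nonneg zero_le_two : 0 ≤ δ).eq_or_lt with hδ | hδ
  · simp [show dist (f t) (f s) = 0 by linarith]
  have hsum : truncSum f δ ![s, t] = δ := by
    simp only [truncSum, Fin.sum_univ_one, Fin.succ_zero_eq_one, Fin.castSucc_zero,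
      Matrix.cons_val_one, Matrix.cons_val_zero]
    rw [show dist (f t) (f s) - δ = δ from sub_half _, max_eq_left hδ.le]
  have hpart : StrictMono ![s, t] := by
    simpa [Fin.strictMono_iff_lt_succ] using hst
  have hmem : ∀ i, ![s, t] i ∈ Icc a b := by
    simpa [Fin.forall_fin_two] using ⟨hs, ht⟩
  have hjump : ENNReal.ofReal δ ≤ pTVnorm f a b p := by
    rw [le_pTVnorm_iff hp, ENNReal.ofReal_rpow_of_pos hδ]
    convert ofReal_rpow_mul_truncSum_le_pTVsup f hδ hpart hmem using 2
    rw [hsum, ← Real.rpow_add_one hδ.ne', sub_add_cancel]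
  calc ENNReal.ofReal (dist (f t) (f s)) = 2 * ENNReal.ofReal δ := by
        rw [← ENNReal.ofReal_ofNat 2, ← ENNReal.ofReal_mul zero_le_two, mul_div_cancel₀ _ two_ne_zero]
    _ ≤ 2 * pTVnorm f a b p := by gcongr

lemma enorm_le_two_mul_fullNorm (f : ℝ → W) (hp : 0 < p) {t : ℝ} (ht : t ∈ Icc a b) :
    ‖f t‖ₑ ≤ 2 * fullNorm f a b p := by
  rcases ht.1.eq_or_lt with rfl | hat
  · exact le_add_right (le_add_right (ofReal_norm (f a)).ge) |>.trans_eq (two_mul _).symm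
  have hjump := dist_le_two_mul_pTVnorm f hp ⟨le_rfl, hat.le.trans ht.2⟩ ht hat
  calc ‖f t‖ₑ ≤ ENNReal.ofReal (‖f a‖ + dist (f t) (f a)) := by
        rw [← ofReal_norm, dist_eq_norm]
        exact ENNReal.ofReal_le_ofReal (norm_le_norm_add_norm_sub' _ _)
    _ ≤ ENNReal.ofReal ‖f a‖ + 2 * pTVnorm f a b p := by
        rw [ENNReal.ofReal_add (norm_nonneg _) dist_nonneg]
        gcongr
    _ ≤ 2 * fullNorm f a b p := by
        rw [fullNorm, mul_add]
        gcongr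
        exact le_mul_of_one_le_left' one_le_two

lemma pTVsup_le_of_dist_le_add {f u v : ℝ → W}
    (H : ∀ r s, dist (f r) (f s) ≤ dist (u r) (u s) + dist (v r) (v s)) :
    pTVsup f a b p ≤ ENNReal.ofReal (2 ^ (p - 1)) * (pTVsup u a b p + pTVsup v a b p) := by
  refine pTVsup_le fun δ hδ n t ht hmem => ?_
  have hδ2 : 0 < δ / 2 := half_pos hδ
  have hscale : δ ^ (p - 1) = 2 ^ (p - 1) * (δ / 2) ^ (p - 1) := by
    rw [← Real.mul_rpow zero_le_two hδ2.le, mul_div_cancel₀ _ two_ne_zero]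
  calc ENNReal.ofReal (δ ^ (p - 1) * truncSum f δ t)
      ≤ ENNReal.ofReal (2 ^ (p - 1) * ((δ / 2) ^ (p - 1) * truncSum u (δ / 2) t
          + (δ / 2) ^ (p - 1) * truncSum v (δ / 2) t)) := by
        rw [hscale, mul_assoc, ← mul_add]
        gcongr
        exact truncSum_le_add H
    _ ≤ ENNReal.ofReal (2 ^ (p - 1)) * (pTVsup u a b p + pTVsup v a b p) := by
        rw [ENNReal.ofReal_mul (by positivity), ENNReal.ofReal_add
          (mul_nonneg (by positivity) (truncSum_nonneg u)) (mul_nonneg (by positivity) (truncSum_nonneg v))]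
        gcongr
        · exact ofReal_rpow_mul_truncSum_le_pTVsup u hδ2 ht hmem
        · exact ofReal_rpow_mul_truncSum_le_pTVsup v hδ2 ht hmem

lemma fullNorm_lt_top_of_sub {f g : ℝ → W} (hp : 0 < p) (hf : fullNorm f a b p < ⊤)
    (hfg : fullNorm (fun t => f t - g t) a b p < ⊤) : fullNorm g a b p < ⊤ := by
  rw [fullNorm_lt_top_iff hp] at *
  refine (pTVsup_le_of_dist_le_add fun r s => ?_).trans_lt <|
    ENNReal.mul_lt_top ENNReal.ofReal_lt_top (ENNReal.add_lt_top.mpr ⟨hf, hfg⟩)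
  rw [dist_eq_norm, dist_eq_norm, dist_eq_norm,
    show g r - g s = (f r - f s) - ((f r - g r) - (f s - g s)) by abel]
  exact norm_sub_le _ _

lemma pTVsup_le_of_tendsto {ι : Type*} {l : Filter ι} [l.NeBot] {u : ι → ℝ → W} {v : ℝ → W}
    {C : ℝ≥0∞} (hlim : ∀ t ∈ Icc a b, Tendsto (fun m => u m t) l (𝓝 (v t)))
    (hC : ∀ᶠ m in l, pTVsup (u m) a b p ≤ C) : pTVsup v a b p ≤ C := by
  refine pTVsup_le fun δ hδ n t ht hmem => le_of_tendsto ?_ <|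
    hC.mono fun m hm => (ofReal_rpow_mul_truncSum_le_pTVsup (u m) hδ ht hmem).trans hm
  exact ENNReal.tendsto_ofReal <|
    (tendsto_truncSum fun i => hlim (t i) (hmem i)).const_mul (δ ^ (p - 1))

lemma pTVnorm_le_of_tendsto {ι : Type*} {l : Filter ι} [l.NeBot] {u : ι → ℝ → W} {v : ℝ → W}
    {C : ℝ≥0∞} (hp : 0 < p) (hlim : ∀ t ∈ Icc a b, Tendsto (fun m => u m t) l (𝓝 (v t)))
    (hC : ∀ᶠ m in l, pTVnorm (u m) a b p ≤ C) : pTVnorm v a b p ≤ C := by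
  simp only [pTVnorm_le_iff hp] at hC ⊢
  exact pTVsup_le_of_tendsto hlim hC

lemma cauchySeq_apply_of_fullNorm {f : ℕ → ℝ → W} (hp : 0 < p)
    (hcau : ∀ ε : ℝ≥0∞, 0 < ε → ∃ N : ℕ, ∀ m ≥ N, ∀ n ≥ N,
      fullNorm (fun t => f m t - f n t) a b p < ε) {t : ℝ} (ht : t ∈ Icc a b) :
    CauchySeq fun m => f m t := by
  refine EMetric.cauchySeq_iff.mpr fun ε hε => ?_
  obtain ⟨N, hN⟩ := hcau (ε / 2) (ENNReal.half_pos hε.ne')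
  refine ⟨N, fun m hm n hn => ?_⟩
  calc edist (f m t) (f n t) ≤ 2 * fullNorm (fun t => f m t - f n t) a b p := by
        rw [edist_eq_enorm_sub]
        exact enorm_le_two_mul_fullNorm (fun t => f m t - f n t) hp ht
    _ < 2 * (ε / 2) := ENNReal.mul_lt_mul_right two_ne_zero ofNat_ne_top (hN m hm n hn)
    _ = ε := ENNReal.mul_div_cancel two_ne_zero ofNat_ne_top

end TruncatedVariation

theorem stmt_15_general {W : Type*} [NormedAddCommGroup W] [CompleteSpace W]
    (a b p : ℝ) (hab : a < b) (hp : 1 ≤ p) (f : ℕ → ℝ → W)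
    (hfin : ∀ n, fullNorm (f n) a b p < ⊤)
    (hcau : ∀ ε : ℝ≥0∞, 0 < ε → ∃ N : ℕ, ∀ m ≥ N, ∀ n ≥ N,
      fullNorm (fun t => f m t - f n t) a b p < ε) :
    ∃ g : ℝ → W, fullNorm g a b p < ⊤ ∧
      Filter.Tendsto (fun n => fullNorm (fun t => f n t - g t) a b p)
        Filter.atTop (nhds 0) := by
  have hp0 : 0 < p := zero_lt_one.trans_le hp
  set g : ℝ → W := fun t => limUnder atTop fun m => f m t
  have hg : ∀ t ∈ Icc a b, Tendsto (fun m => f m t) atTop (𝓝 (g t)) := fun t ht =>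
    (cauchySeq_apply_of_fullNorm hp0 hcau ht).tendsto_limUnder
  have hvalue : Tendsto (fun n => ENNReal.ofReal ‖f n a - g a‖) atTop (𝓝 0) := by
    have hdiff : Tendsto (fun n => f n a - g a) atTop (𝓝 0) :=
      sub_self (g a) ▸ (hg a ⟨le_rfl, hab.le⟩).sub_const (g a)
    simpa using ENNReal.tendsto_ofReal hdiff.norm
  have hvar : Tendsto (fun n => pTVnorm (fun t => f n t - g t) a b p) atTop (𝓝 0) := by
    refine ENNReal.tendsto_atTop_zero.mpr fun ε hε => ?_
    obtain ⟨N, hN⟩ := hcau ε hε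
    refine ⟨N, fun n hn => pTVnorm_le_of_tendsto hp0
      (fun t ht => tendsto_const_nhds.sub (hg t ht)) ?_⟩
    filter_upwards [eventually_ge_atTop N] with m hm
    exact le_add_self.trans (hN n hn m hm).le
  have htend := hvalue.add hvar
  rw [add_zero] at htend
  obtain ⟨N, hN⟩ := (htend.eventually (gt_mem_nhds zero_lt_top)).exists
  exact ⟨g, fullNorm_lt_top_of_sub hp0 (hfin N) hN, htend⟩

theorem stmt_15 {W : Type*} [NormedAddCommGroup W] [NormedSpace ℝ W] [CompleteSpace W]
    (a b p : ℝ) (hab : a < b) (hp : 1 ≤ p) (f : ℕ → ℝ → W)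
    (hfin : ∀ n, fullNorm (f n) a b p < ⊤)
    (hcau : ∀ ε : ℝ≥0∞, 0 < ε → ∃ N : ℕ, ∀ m ≥ N, ∀ n ≥ N,
      fullNorm (fun t => f m t - f n t) a b p < ε) :
    ∃ g : ℝ → W, fullNorm g a b p < ⊤ ∧
      Filter.Tendsto (fun n => fullNorm (fun t => f n t - g t) a b p)
        Filter.atTop (nhds 0) :=
  stmt_15_general a b p hab hp f hfin hcau
end
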